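/- Let X, Y be symmetric real n×n matrices and η > 0. Let u ∈ ℝ be such that u·I_n − η·X is positive definite and tr((u·I_n − η·X)^{-2}) = 1, and set M := (u·I_n − η·X)^{-2}. Define Φ_η(Z) := sup over density matrices M' of [tr(Z·M') + (2/η)·tr(√M')]. If ‖√M · η·Y‖ ≤ 1/2 (spectral norm), then Φ_η(X + Y) − Φ_η(X) ≤ tr(M·Y) + 2η·tr(√M · Y · √M · Y · √M). -/

import Mathlib

/-!
Put `B = u - ηX`. For symmetric `R` and positive definite `B'`, expanding
`tr((R - B'⁻¹) B' (R - B'⁻¹)) ≥ 0` gives `2 tr R ≤ tr(B' R²) + tr B'⁻¹`; with `R = √M` this bounds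
`Φ_η(Z)` by `(v + tr (v - ηZ)⁻¹) / η` whenever `v - ηZ` is positive definite, with equality for
`Z = X`, `v = u`, attained at `M = B⁻²`. So the increase is at most `(tr (B - D)⁻¹ - tr B⁻¹) / η`,
`D = ηY`. The resolvent expansion
`(B - D)⁻¹ = B⁻¹ + B⁻¹ D B⁻¹ + B⁻¹ D (B - D)⁻¹ D B⁻¹` reduces the claim to `(B - D)⁻¹ ≤ 2 B⁻¹`,
i.e. `D ≤ B / 2`, and this holds because `B^{-1/2} D B^{-1/2}` is similar to `B⁻¹ D`, whose
spectral radius is at most `‖√M D‖ = ‖B⁻¹ D‖ ≤ 1/2`.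
-/

open Matrix
open scoped Matrix.Norms.L2Operator

open Classical in
/-- The positive semidefinite square root of a matrix (zero if the matrix is not
positive semidefinite). -/
noncomputable def psdSqrt {n : ℕ} (M : Matrix (Fin n) (Fin n) ℝ) :
    Matrix (Fin n) (Fin n) ℝ :=
  if h : M.PosSemidef then
    (h.1.eigenvectorUnitary : Matrix (Fin n) (Fin n) ℝ) *
      diagonal (fun i => Real.sqrt (h.1.eigenvalues i)) *
      (star (h.1.eigenvectorUnitary : Matrix (Fin n) (Fin n) ℝ))
  else 0

/-- The `ℓ_{1/2}`-regularized maximum-eigenvalue potential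
`Φ_η(X) = sup { tr(X M) + (2/η) tr(√M) : M a density matrix }`. -/
noncomputable def potential {n : ℕ} (η : ℝ) (X : Matrix (Fin n) (Fin n) ℝ) : ℝ :=
  sSup {r : ℝ | ∃ M : Matrix (Fin n) (Fin n) ℝ, M.PosSemidef ∧ M.trace = 1 ∧
    r = (X * M).trace + (2 / η) * (psdSqrt M).trace}

open scoped MatrixOrder

namespace Matrix

variable {ι : Type*} [Fintype ι] [DecidableEq ι]

theorem trace_smul_one_sub_smul_mul (v η : ℝ) (Z M : Matrix ι ι ℝ) :
    ((v • 1 - η • Z) * M).trace = v * M.trace - η * (Z * M).trace := by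
  simp [Matrix.sub_mul, trace_sub, trace_smul]

theorem inv_eq_inv_add_inv_mul_sub_mul_inv_add {R : Type*} [CommRing R] {P Q : Matrix ι ι R}
    (hP : IsUnit P.det) (hQ : IsUnit Q.det) :
    Q⁻¹ = P⁻¹ + P⁻¹ * (P - Q) * P⁻¹ + P⁻¹ * (P - Q) * Q⁻¹ * (P - Q) * P⁻¹ := by
  have hleft : P⁻¹ * (P - Q) * Q⁻¹ = Q⁻¹ - P⁻¹ := by
    rw [Matrix.mul_sub, Matrix.sub_mul, nonsing_inv_mul _ hP, Matrix.mul_assoc,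
      mul_nonsing_inv _ hQ, one_mul, mul_one]
  have hright : Q⁻¹ * (P - Q) * P⁻¹ = Q⁻¹ - P⁻¹ := by
    rw [Matrix.mul_sub, Matrix.sub_mul, nonsing_inv_mul _ hQ, Matrix.mul_assoc,
      mul_nonsing_inv _ hP, one_mul, mul_one]
  calc Q⁻¹ = P⁻¹ + P⁻¹ * (P - Q) * Q⁻¹ := by rw [hleft]; abel
    _ = P⁻¹ + P⁻¹ * (P - Q) * (P⁻¹ + Q⁻¹ * (P - Q) * P⁻¹) := by rw [hright]; abel_nf
    _ = _ := by simp only [Matrix.mul_add, Matrix.mul_assoc, add_assoc]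

omit [Fintype ι] [DecidableEq ι] in
theorem PosDef.of_le {Q P : Matrix ι ι ℝ} (hQ : Q.PosDef) (hQP : Q ≤ P) : P.PosDef := by
  simpa using hQ.add_posSemidef hQP

theorem PosDef.inv_anti {Q P : Matrix ι ι ℝ} (hQ : Q.PosDef) (hQP : Q ≤ P) : P⁻¹ ≤ Q⁻¹ := by
  have hP := hQ.of_le hQP
  have hPinv : (P⁻¹)ᴴ = P⁻¹ := hP.inv.isHermitian
  have hE : (P - Q).PosSemidef := hQP
  have first : (P⁻¹ * (P - Q) * P⁻¹).PosSemidef := by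
    have := hE.conjTranspose_mul_mul_same P⁻¹
    rwa [hPinv] at this
  have second : (P⁻¹ * (P - Q) * Q⁻¹ * (P - Q) * P⁻¹).PosSemidef := by
    have := hQ.inv.posSemidef.conjTranspose_mul_mul_same ((P - Q) * P⁻¹)
    rwa [conjTranspose_mul, hPinv, hE.isHermitian.eq, Matrix.mul_assoc, Matrix.mul_assoc,
      ← Matrix.mul_assoc P⁻¹, ← Matrix.mul_assoc, ← Matrix.mul_assoc] at this
  -- `Q⁻¹ - P⁻¹ = P⁻¹ E P⁻¹ + P⁻¹ E Q⁻¹ E P⁻¹` with `E = P - Q`: a sum of two congruences.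
  rw [Matrix.le_iff, inv_eq_inv_add_inv_mul_sub_mul_inv_add hP.det_pos.ne'.isUnit
    hQ.det_pos.ne'.isUnit, add_sub_right_comm, add_sub_right_comm, sub_self, zero_add]
  exact first.add second

theorem PosDef.le_smul_of_norm_inv_mul_le {B D : Matrix ι ι ℝ} (hB : B.PosDef)
    (hD : D.IsHermitian) {r : ℝ} (h : ‖B⁻¹ * D‖ ≤ r) : D ≤ r • B := by
  nontriviality Matrix ι ι ℝ
  set C := CFC.sqrt B
  have hC : IsStrictlyPositive C := hB.isStrictlyPositive.sqrt
  have hCC : C * C = B := CFC.sqrt_mul_sqrt_self B hB.posSemidef.nonneg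
  have hCdet : IsUnit C.det := hC.posDef.det_pos.ne'.isUnit
  set u : (Matrix ι ι ℝ)ˣ := hC.isUnit.unit
  have hu : ((u⁻¹ : (Matrix ι ι ℝ)ˣ) : Matrix ι ι ℝ) = C⁻¹ := (coe_units_inv u).trans rfl
  set S := C⁻¹ * D * C⁻¹
  have hS : IsSelfAdjoint S :=
    hD.isSelfAdjoint.conjugate_self hC.posDef.inv.isHermitian.isSelfAdjoint
  -- `S` is self-adjoint and similar to `B⁻¹ * D`, so its eigenvalues are at most `‖B⁻¹ * D‖`.
  have hspec : spectrum ℝ S = spectrum ℝ (B⁻¹ * D) := by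
    rw [← spectrum.units_conjugate' (u := u), hu]
    congr 1
    simp only [S, u, IsUnit.unit_spec, ← hCC, Matrix.mul_inv_rev, Matrix.mul_assoc,
      nonsing_inv_mul _ hCdet, mul_one]
  have hSr : S ≤ algebraMap ℝ _ r := by
    refine le_algebraMap_of_spectrum_le (fun x hx => ?_) hS
    rw [hspec] at hx
    exact (le_abs_self x).trans ((spectrum.norm_le_norm_of_mem hx).trans h)
  have := hC.isSelfAdjoint.conjugate_le_conjugate hSr
  rwa [Algebra.algebraMap_eq_smul_one, Matrix.mul_smul, mul_one, Matrix.smul_mul, hCC,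
    Matrix.mul_assoc, Matrix.mul_assoc, nonsing_inv_mul _ hCdet, mul_one, ← Matrix.mul_assoc,
    mul_nonsing_inv _ hCdet, one_mul] at this

theorem trace_inv_sub_le {B D : Matrix ι ι ℝ} (hB : B.PosDef) (hDB : D ≤ (1 / 2 : ℝ) • B) :
    (B - D).PosDef ∧ ((B - D)⁻¹).trace ≤
      (B⁻¹).trace + (B⁻¹ * D * B⁻¹).trace + 2 * (B⁻¹ * D * B⁻¹ * D * B⁻¹).trace := by
  have hhalf : ((1 / 2 : ℝ) • B).PosDef := hB.smul (by norm_num)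
  have hle : (1 / 2 : ℝ) • B ≤ B - D :=
    le_sub_comm.mp (by rwa [show B - (1 / 2 : ℝ) • B = (1 / 2 : ℝ) • B by module])
  have hP : (B - D).PosDef := hhalf.of_le hle
  refine ⟨hP, ?_⟩
  have hinv : (B - D)⁻¹ ≤ (2 : ℝ) • B⁻¹ := by
    have := hhalf.inv_anti hle
    rwa [show ((1 / 2 : ℝ) • B)⁻¹ = (2 : ℝ) • B⁻¹ from inv_eq_left_inv (by
      rw [Matrix.smul_mul, Matrix.mul_smul, nonsing_inv_mul _ hB.det_pos.ne'.isUnit, smul_smul]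
      norm_num)] at this
  have hD : D.IsHermitian := by
    simpa using (hB.isHermitian.smul (IsSelfAdjoint.all (1 / 2 : ℝ))).sub
      (Matrix.le_iff.mp hDB).isHermitian
  have hconj := OrderHomClass.mono (tracePositiveLinearMap ι ℝ ℝ)
    (star_left_conjugate_le_conjugate hinv (D * B⁻¹))
  simp only [tracePositiveLinearMap_apply, star_eq_conjTranspose, conjTranspose_mul,
    hB.inv.isHermitian.eq, hD.eq, Matrix.mul_smul, Matrix.smul_mul, trace_smul, smul_eq_mul,
    ← Matrix.mul_assoc] at hconj
  rw [inv_eq_inv_add_inv_mul_sub_mul_inv_add hB.det_pos.ne'.isUnit hP.det_pos.ne'.isUnit,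
    sub_sub_cancel, trace_add, trace_add]
  linarith

theorem PosDef.two_mul_trace_le {B R : Matrix ι ι ℝ} (hB : B.PosDef) (hR : R.IsHermitian) :
    2 * R.trace ≤ (B * (R * R)).trace + (B⁻¹).trace := by
  have hBB : B * B⁻¹ = 1 := mul_nonsing_inv _ hB.det_pos.ne'.isUnit
  have hBB' : B⁻¹ * B = 1 := nonsing_inv_mul _ hB.det_pos.ne'.isUnit
  have hsq := (hB.posSemidef.conjTranspose_mul_mul_same (R - B⁻¹)).trace_nonneg
  have hexpand : (R - B⁻¹)ᴴ * B * (R - B⁻¹) = R * B * R - R - R + B⁻¹ := by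
    rw [conjTranspose_sub, hR.eq, hB.inv.isHermitian.eq]
    simp only [Matrix.sub_mul, Matrix.mul_sub, Matrix.mul_assoc, hBB, hBB', mul_one, one_mul]
    abel
  have hcycle : (R * B * R).trace = (B * (R * R)).trace := by
    rw [trace_mul_cycle, trace_mul_comm]
  rw [hexpand, trace_add, trace_sub, trace_sub, hcycle] at hsq
  linarith

end Matrix

variable {n : ℕ}

theorem psdSqrt_eq_cfcSqrt {M : Matrix (Fin n) (Fin n) ℝ} (h : M.PosSemidef) :
    psdSqrt M = CFC.sqrt M := by
  rw [psdSqrt, dif_pos h, CFC.sqrt_eq_cfc, cfc_nnreal_eq_real _ M h.nonneg, h.1.cfc_eq]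
  simp [IsHermitian.cfc, Function.comp_def, Real.coe_sqrt, Real.coe_toNNReal',
    max_eq_left (h.eigenvalues_nonneg _)]

theorem psdSqrt_sq {A : Matrix (Fin n) (Fin n) ℝ} (hA : A.PosSemidef) : psdSqrt (A ^ 2) = A := by
  rw [psdSqrt_eq_cfcSqrt (hA.pow 2)]
  exact CFC.sqrt_sq A hA.nonneg

theorem trace_mul_add_trace_psdSqrt_le {η v : ℝ} (hη : 0 < η) {Z M : Matrix (Fin n) (Fin n) ℝ}
    (hB : (v • 1 - η • Z).PosDef) (hM : M.PosSemidef) (htr : M.trace = 1) :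
    (Z * M).trace + 2 / η * (psdSqrt M).trace ≤ (v + ((v • 1 - η • Z)⁻¹).trace) / η := by
  have hR : psdSqrt M * psdSqrt M = M := by
    rw [psdSqrt_eq_cfcSqrt hM]; exact CFC.sqrt_mul_sqrt_self M hM.nonneg
  have hRsa : (psdSqrt M).IsHermitian := by
    rw [psdSqrt_eq_cfcSqrt hM]; exact (CFC.sqrt_nonneg M).posSemidef.isHermitian
  have hamgm := hB.two_mul_trace_le hRsa
  rw [hR, trace_smul_one_sub_smul_mul, htr] at hamgm
  rw [le_div_iff₀ hη]
  have hscale : ((Z * M).trace + 2 / η * (psdSqrt M).trace) * η =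
      η * (Z * M).trace + 2 * (psdSqrt M).trace := by
    field_simp
  linarith

theorem potential_le_of_posDef {η v : ℝ} (hη : 0 < η) {Z : Matrix (Fin n) (Fin n) ℝ}
    (hB : (v • 1 - η • Z).PosDef)
    (hdensity : ∃ M : Matrix (Fin n) (Fin n) ℝ, M.PosSemidef ∧ M.trace = 1) :
    potential η Z ≤ (v + ((v • 1 - η • Z)⁻¹).trace) / η := by
  obtain ⟨M₀, hM₀, htr₀⟩ := hdensity
  refine csSup_le ⟨_, M₀, hM₀, htr₀, rfl⟩ ?_
  rintro r ⟨M, hM, htr, rfl⟩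
  exact trace_mul_add_trace_psdSqrt_le hη hB hM htr

theorem potential_eq_of_trace_inv_sq {η v : ℝ} (hη : 0 < η) {Z : Matrix (Fin n) (Fin n) ℝ}
    (hB : (v • 1 - η • Z).PosDef) (htr : ((v • 1 - η • Z)⁻¹ ^ 2).trace = 1) :
    potential η Z = (v + ((v • 1 - η • Z)⁻¹).trace) / η := by
  set B := v • 1 - η • Z with hBdef
  have hM : (B⁻¹ ^ 2).PosSemidef := hB.inv.posSemidef.pow 2
  refine le_antisymm (potential_le_of_posDef hη hB ⟨_, hM, htr⟩) ?_
  have hbdd : BddAbove {r : ℝ | ∃ M : Matrix (Fin n) (Fin n) ℝ, M.PosSemidef ∧ M.trace = 1 ∧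
      r = (Z * M).trace + (2 / η) * (psdSqrt M).trace} := by
    refine ⟨(v + (B⁻¹).trace) / η, ?_⟩
    rintro r ⟨M, hM, htr, rfl⟩
    exact trace_mul_add_trace_psdSqrt_le hη hB hM htr
  refine le_csSup hbdd ⟨B⁻¹ ^ 2, hM, htr, ?_⟩
  have hBM : (B * B⁻¹ ^ 2).trace = (B⁻¹).trace := by
    rw [sq, ← Matrix.mul_assoc, mul_nonsing_inv _ hB.det_pos.ne'.isUnit, one_mul]
  rw [hBdef, trace_smul_one_sub_smul_mul, htr] at hBM
  rw [psdSqrt_sq hB.inv.posSemidef]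
  field_simp
  linarith

theorem potential_increase_general (n : ℕ) (X Y : Matrix (Fin n) (Fin n) ℝ)
    (hY : Y.IsSymm) (η : ℝ) (hη : 0 < η) (u : ℝ)
    (hu : (u • (1 : Matrix (Fin n) (Fin n) ℝ) - η • X).PosDef)
    (htr : ((u • (1 : Matrix (Fin n) (Fin n) ℝ) - η • X)⁻¹ ^ 2).trace = 1)
    (hnorm : ‖psdSqrt ((u • (1 : Matrix (Fin n) (Fin n) ℝ) - η • X)⁻¹ ^ 2) * (η • Y)‖ ≤ 1 / 2) :
    potential η (X + Y) - potential η X ≤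
      (((u • (1 : Matrix (Fin n) (Fin n) ℝ) - η • X)⁻¹ ^ 2) * Y).trace +
        2 * η *
          (psdSqrt ((u • (1 : Matrix (Fin n) (Fin n) ℝ) - η • X)⁻¹ ^ 2) * Y *
            psdSqrt ((u • (1 : Matrix (Fin n) (Fin n) ℝ) - η • X)⁻¹ ^ 2) * Y *
            psdSqrt ((u • (1 : Matrix (Fin n) (Fin n) ℝ) - η • X)⁻¹ ^ 2)).trace := by
  set B := u • (1 : Matrix (Fin n) (Fin n) ℝ) - η • X
  rw [psdSqrt_sq hu.inv.posSemidef] at hnorm ⊢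
  have hD : (η • Y).IsHermitian := (isHermitian_iff_isSymm.mpr hY).smul (IsSelfAdjoint.all η)
  obtain ⟨hPD, hres⟩ := trace_inv_sub_le hu (hu.le_smul_of_norm_inv_mul_le hD hnorm)
  have hXY : u • (1 : Matrix (Fin n) (Fin n) ℝ) - η • (X + Y) = B - η • Y := by
    rw [smul_add, sub_add_eq_sub_sub]
  have hup := potential_le_of_posDef hη (hXY ▸ hPD) ⟨_, hu.inv.posSemidef.pow 2, htr⟩
  rw [hXY] at hup
  have hfirst : (B⁻¹ * (η • Y) * B⁻¹).trace = η * (B⁻¹ ^ 2 * Y).trace := by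
    rw [Matrix.mul_smul, Matrix.smul_mul, trace_smul, smul_eq_mul, trace_mul_cycle, sq]
  have hsecond : (B⁻¹ * (η • Y) * B⁻¹ * (η • Y) * B⁻¹).trace =
      η ^ 2 * (B⁻¹ * Y * B⁻¹ * Y * B⁻¹).trace := by
    simp only [Matrix.mul_smul, Matrix.smul_mul, smul_smul, trace_smul, smul_eq_mul, sq]
  rw [hfirst, hsecond] at hres
  calc potential η (X + Y) - potential η X
      ≤ (u + ((B - η • Y)⁻¹).trace) / η - (u + (B⁻¹).trace) / η := by
        rw [potential_eq_of_trace_inv_sq hη hu htr]; exact sub_le_sub_right hup _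
    _ = (((B - η • Y)⁻¹).trace - (B⁻¹).trace) / η := by ring
    _ ≤ (B⁻¹ ^ 2 * Y).trace + 2 * η * (B⁻¹ * Y * B⁻¹ * Y * B⁻¹).trace := by
        rw [div_le_iff₀ hη]; linarith

/-- Lemma 3.1 (potential increase bound, `c = 2` form). -/
theorem potential_increase (n : ℕ) (X Y : Matrix (Fin n) (Fin n) ℝ)
    (hX : X.IsSymm) (hY : Y.IsSymm) (η : ℝ) (hη : 0 < η) (u : ℝ)
    (hu : (u • (1 : Matrix (Fin n) (Fin n) ℝ) - η • X).PosDef)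
    (htr : ((u • (1 : Matrix (Fin n) (Fin n) ℝ) - η • X)⁻¹ ^ 2).trace = 1)
    (hnorm : ‖psdSqrt ((u • (1 : Matrix (Fin n) (Fin n) ℝ) - η • X)⁻¹ ^ 2) * (η • Y)‖ ≤ 1 / 2) :
    potential η (X + Y) - potential η X ≤
      (((u • (1 : Matrix (Fin n) (Fin n) ℝ) - η • X)⁻¹ ^ 2) * Y).trace +
        2 * η *
          (psdSqrt ((u • (1 : Matrix (Fin n) (Fin n) ℝ) - η • X)⁻¹ ^ 2) * Y *
            psdSqrt ((u • (1 : Matrix (Fin n) (Fin n) ℝ) - η • X)⁻¹ ^ 2) * Y *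
            psdSqrt ((u • (1 : Matrix (Fin n) (Fin n) ℝ) - η • X)⁻¹ ^ 2)).trace :=
  potential_increase_general n X Y hY η hη u hu htr hnorm
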